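/- arXiv:2412.15543 — 4 statements merged into one kernel-verified Lean document; each statement's English description precedes it below -/
import Mathlib

section
/- Let A be a finite group, G a normal subgroup of A, and U a subgroup of A such that every element of prime power order in U is A-conjugate to an element of G and every element of prime power order in G is A-conjugate to an element of U (i.e. P_A(U) = P_A(G)). Then U ≤ G. -/
/-- The `A`-prime-power-covering set of a subgroup `U` of `A`:
the set of all `A`-conjugates of elements of `U` of prime power order. -/
def ppcSet {A : Type*} [Group A] (U : Subgroup A) : Set A :=
  {y | ∃ x ∈ U, (∃ p k : ℕ, p.Prime ∧ orderOf x = p ^ k) ∧ ∃ a : A, a⁻¹ * x * a = y}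

theorem stmt0 {A : Type*} [Group A] [Finite A] (G U : Subgroup A)
    (hG : G.Normal) (h : ppcSet U = ppcSet G) : U ≤ G := by
  intro x hxU
  rw [← QuotientGroup.eq_one_iff]
  by_contra hne
  set xb : A ⧸ G := (x : A ⧸ G) with hxb
  have hord1 : orderOf xb ≠ 1 := by simpa [orderOf_eq_one_iff] using hne
  have hxfin : IsOfFinOrder x := isOfFinOrder_of_finite x
  have hn0 : orderOf x ≠ 0 := hxfin.orderOf_pos.ne'
  have hbdvd : orderOf xb ∣ orderOf x := orderOf_map_dvd (QuotientGroup.mk' G) x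
  have hb0 : orderOf xb ≠ 0 := fun h0 => hn0 (Nat.eq_zero_of_zero_dvd (h0 ▸ hbdvd))
  set p := (orderOf xb).minFac with hpdef
  have hp : p.Prime := Nat.minFac_prime hord1
  have hpdvdb : p ∣ orderOf xb := Nat.minFac_dvd _
  set n := orderOf x with hndef
  set m := ordCompl[p] n with hmdef
  have hmdvd : m ∣ n := Nat.ordCompl_dvd n p
  -- the prime power part
  have hy : orderOf (x ^ m) = p ^ (n.factorization p) := by
    rw [orderOf_pow, ← hndef, Nat.gcd_eq_right hmdvd, hmdef,
      Nat.div_div_self (Nat.ordProj_dvd n p) hn0]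
  have hyU : (x ^ m) ∈ ppcSet U := by
    exact ⟨x ^ m, U.pow_mem hxU m, ⟨p, n.factorization p, hp, hy⟩, 1, by group⟩
  have hyG : (x ^ m) ∈ G := by
    rw [h] at hyU
    obtain ⟨g, hgG, -, a, ha⟩ := hyU
    have := hG.conj_mem g hgG a⁻¹
    simpa [ha, mul_assoc] using this
  have hpow1 : xb ^ m = 1 := by
    have := (QuotientGroup.eq_one_iff (x ^ m)).2 hyG
    simpa [hxb] using this
  have hdvdm : orderOf xb ∣ m := orderOf_dvd_of_pow_eq_one hpow1
  exact Nat.not_dvd_ordCompl hp hn0 (hpdvdb.trans hdvdm)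
end

section
/- Let A be a finite group with subgroups U ≤ G ≤ A such that P_A(U) = P_A(G), and let N = Core_A(G) = ⋂_{a∈A} G^a be the A-core of G. Then P_A(U ∩ N) = P_A(N). -/
theorem stmt1 {A : Type*} [Group A] [Finite A] (U G : Subgroup A)
    (hUG : U ≤ G) (h : ppcSet U = ppcSet G) :
    ppcSet (U ⊓ G.normalCore) = ppcSet G.normalCore := by
  apply Set.eq_of_subset_of_subset
  · rintro y ⟨x, hx, hpp, a, ha⟩
    exact ⟨x, hx.2, hpp, a, ha⟩
  · rintro y ⟨x, hxN, hpp, a, ha⟩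
    have hxG : x ∈ ppcSet G := ⟨x, G.normalCore_le hxN, hpp, 1, by group⟩
    rw [← h] at hxG
    obtain ⟨u, hu, hupp, b, hb⟩ := hxG
    have huN : u ∈ G.normalCore := by
      have : b⁻¹ * u * b ∈ G.normalCore := hb ▸ hxN
      have := (G.normalCore_normal).conj_mem _ this b
      simpa [mul_assoc] using this
    refine ⟨u, ⟨hu, huN⟩, hupp, b * a, ?_⟩
    rw [← ha, ← hb]; group
end

section
/- Let A be a finite group with subgroups U and G such that P_A(U) = P_A(G), where |A : G| = n ≥ 2 and Core_A(G) = N ≠ 1. Suppose f is an increasing integer function such that for every finite group B with normal subgroup M of index m and subgroup V ≤ M with P_B(V) = P_B(M) we have |M : V| ≤ f(m). Then |A : U| ≤ n! · f(n!). -/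
open scoped Nat

lemma ppcSet_mono {A : Type*} [Group A] {U V : Subgroup A} (hUV : U ≤ V) :
    ppcSet U ⊆ ppcSet V := by
  rintro _ ⟨x, hx, hpp, a, rfl⟩
  exact ⟨x, hUV hx, hpp, a, rfl⟩

lemma ppcSet_map_mulEquiv {A B : Type*} [Group A] [Group B] (e : A ≃* B) (U : Subgroup A) :
    ppcSet (U.map e.toMonoidHom) = e '' ppcSet U := by
  ext y
  constructor
  · rintro ⟨_, ⟨x, hx, rfl⟩, hpp, a, rfl⟩
    refine ⟨(e.symm a)⁻¹ * x * e.symm a, ⟨x, hx, ?_, e.symm a, rfl⟩, by simp⟩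
    rwa [MulEquiv.coe_toMonoidHom, MulEquiv.orderOf_eq] at hpp
  · rintro ⟨_, ⟨x, hx, hpp, a, rfl⟩, rfl⟩
    exact ⟨e x, ⟨x, hx, rfl⟩, by rwa [MulEquiv.orderOf_eq], e a, by simp⟩

lemma ppcSet_inf_eq_of_normal {A : Type*} [Group A] {U G N : Subgroup A}
    (h : ppcSet U = ppcSet G) (hN : N.Normal) (hNG : N ≤ G) :
    ppcSet (U ⊓ N) = ppcSet N := by
  refine (ppcSet_mono inf_le_right).antisymm ?_
  rintro _ ⟨x, hx, hpp, a, rfl⟩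
  obtain ⟨u, hu, hpp', b, rfl⟩ : x ∈ ppcSet U := h ▸ ⟨x, hNG hx, hpp, 1, by group⟩
  have huN : u ∈ N := by
    simpa [mul_assoc] using hN.conj_mem _ hx b
  exact ⟨u, ⟨hu, huN⟩, hpp', b * a, by group⟩

lemma index_normalCore_dvd_factorial {A : Type*} [Group A] [Finite A] (G : Subgroup A) :
    G.normalCore.index ∣ G.index ! := by
  rw [Subgroup.normalCore_eq_ker, Subgroup.index_ker, Subgroup.index_eq_card, ← Nat.card_perm]
  exact Subgroup.card_subgroup_dvd_card _

lemma relIndex_le_of_forall_type {B : Type*} [Group B] [Finite B] {f : ℕ → ℕ}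
    (hf : ∀ (B : Type) (_ : Group B) (_ : Finite B) (M V : Subgroup B),
      M.Normal → V ≤ M → ppcSet V = ppcSet M → V.relIndex M ≤ f M.index)
    {M V : Subgroup B} (hM : M.Normal) (hVM : V ≤ M) (hVM' : ppcSet V = ppcSet M) :
    V.relIndex M ≤ f M.index := by
  let e : B ≃* Shrink.{0} B := Shrink.mulEquiv.symm
  have := Finite.of_equiv B e.toEquiv
  have key := hf _ inferInstance inferInstance (M.map e.toMonoidHom) (V.map e.toMonoidHom)
    (hM.map _ e.surjective) (Subgroup.map_mono hVM)
    (by rw [ppcSet_map_mulEquiv, ppcSet_map_mulEquiv, hVM'])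
  rwa [Subgroup.relIndex_map_map_of_injective _ _ e.injective,
    show (M.map e.toMonoidHom).index = M.index from M.index_map_equiv e] at key

theorem stmt2_general {A : Type*} [Group A] [Finite A] (U G : Subgroup A) (n : ℕ)
    (h : ppcSet U = ppcSet G) (hn : G.index = n)
    (f : ℕ → ℕ) (hf : Monotone f)
    (hconj : ∀ (B : Type) (_ : Group B) (_ : Finite B) (M V : Subgroup B),
      M.Normal → V ≤ M → ppcSet V = ppcSet M → V.relIndex M ≤ f M.index) :
    U.index ≤ Nat.factorial n * f (Nat.factorial n) := by
  set N := G.normalCore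
  have hNn : N.index ≤ n ! :=
    Nat.le_of_dvd n.factorial_pos (hn ▸ index_normalCore_dvd_factorial G)
  have hrel : (U ⊓ N).relIndex N ≤ f N.index :=
    relIndex_le_of_forall_type hconj G.normalCore_normal inf_le_right
      (ppcSet_inf_eq_of_normal h G.normalCore_normal G.normalCore_le)
  calc U.index ≤ (U ⊓ N).index :=
        Nat.le_of_dvd (Nat.pos_of_ne_zero Subgroup.index_ne_zero_of_finite)
          (Subgroup.index_dvd_of_le inf_le_left)
    _ = (U ⊓ N).relIndex N * N.index := (Subgroup.relIndex_mul_index inf_le_right).symm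
    _ ≤ f (n !) * n ! := Nat.mul_le_mul (hrel.trans (hf hNn)) hNn
    _ = n ! * f (n !) := Nat.mul_comm _ _

theorem stmt2 {A : Type*} [Group A] [Finite A] (U G : Subgroup A) (n : ℕ)
    (h : ppcSet U = ppcSet G) (hn : G.index = n) (hn2 : 2 ≤ n)
    (hcore : G.normalCore ≠ ⊥)
    (f : ℕ → ℕ) (hf : Monotone f)
    (hconj : ∀ (B : Type) (_ : Group B) (_ : Finite B) (M V : Subgroup B),
      M.Normal → V ≤ M → ppcSet V = ppcSet M → V.relIndex M ≤ f M.index) :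
    U.index ≤ Nat.factorial n * f (Nat.factorial n) :=
  stmt2_general U G n h hn f hf hconj
end

section
/- Let G ≤ Sym(Ω) be a finite innately transitive permutation group with plinth M ≅ T^s (T a finite nonabelian simple group). If K/L is a chief factor of G with K/L ≅ T^s, then K contains a plinth of G. In particular, if M is the unique plinth of G, then M ≤ K. -/
/-- A plinth of `G` acting on `Ω`: a transitive minimal normal subgroup. -/
def IsPlinth {G : Type*} [Group G] (Ω : Type*) [MulAction G Ω] (M : Subgroup G) : Prop :=
  M.Normal ∧ M ≠ ⊥ ∧ (∀ N : Subgroup G, N.Normal → N ≤ M → N = ⊥ ∨ N = M) ∧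
    MulAction.IsPretransitive M Ω

theorem stmt3 {G Ω : Type*} [Group G] [Finite G] [MulAction G Ω]
    [FaithfulSMul G Ω] [MulAction.IsPretransitive G Ω]
    (M : Subgroup G) (hM : IsPlinth Ω M)
    (T : Type*) [Group T] [Finite T] [IsSimpleGroup T] (hT : ∃ a b : T, a * b ≠ b * a)
    (s : ℕ) (hs : 1 ≤ s) (hMT : Nonempty (M ≃* (Fin s → T)))
    (K L : Subgroup G) (hK : K.Normal) (hL : L.Normal) (hLK : L < K)
    (hchief : ∀ X : Subgroup G, X.Normal → L ≤ X → X ≤ K → X = L ∨ X = K)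
    (hKL : Nonempty ((↥K ⧸ L.subgroupOf K) ≃* (Fin s → T))) :
    (∃ P : Subgroup G, IsPlinth Ω P ∧ P ≤ K) ∧
      ((∀ P : Subgroup G, IsPlinth Ω P → P = M) → M ≤ K) := by
  obtain ⟨hMnorm, hMbot, hMmin, hMtrans⟩ := hM
  -- Ω is nonempty, since otherwise G is trivial and M = ⊥
  have hΩne : Nonempty Ω := by
    by_contra h
    have hE : IsEmpty Ω := not_nonempty_iff.mp h
    have hsub : Subsingleton G := ⟨fun a b => eq_of_smul_eq_smul (α := Ω) fun ω => hE.elim ω⟩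
    exact hMbot (le_bot_iff.mp fun x hx => by
      simp [Subsingleton.elim x (1 : G)])
  obtain ⟨ω₀⟩ := hΩne
  -- M ⊓ K is normal, so it is ⊥ or M
  have hinf : (M ⊓ K) = ⊥ ∨ (M ⊓ K) = M := by
    have := hMnorm; have := hK
    exact hMmin (M ⊓ K) (Subgroup.normal_inf_normal M K) inf_le_left
  rcases hinf with hdisj | hMK
  · -- disjoint case : K itself is a plinth
    have hcomm : ∀ x ∈ M, ∀ y ∈ K, Commute x y :=
      fun x hx y hy => Subgroup.commute_of_normal_of_disjoint M K hMnorm hK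
        (disjoint_iff.mpr hdisj) x y hx hy
    -- K acts semiregularly
    have hsemireg : ∀ k ∈ K, ∀ ω : Ω, k • ω = ω → k = 1 := by
      intro k hk ω hω
      apply eq_of_smul_eq_smul (α := Ω)
      intro ω'
      rw [one_smul]
      obtain ⟨m, hm⟩ := hMtrans.exists_smul_eq ω ω'
      have hmω : (m : G) • ω = ω' := hm
      have hcom : Commute (m : G) k := hcomm m m.2 k hk
      calc k • ω' = k • ((m : G) • ω) := by rw [hmω]
        _ = (k * (m : G)) • ω := (mul_smul _ _ _).symm
        _ = ((m : G) * k) • ω := by rw [hcom.eq]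
        _ = (m : G) • (k • ω) := mul_smul _ _ _
        _ = (m : G) • ω := by rw [hω]
        _ = ω' := hmω
    -- the orbit map from K is injective
    set f : K → Ω := fun k => (k : G) • ω₀ with hf
    have hfinj : Function.Injective f := by
      intro k₁ k₂ h
      have : ((k₂ : G)⁻¹ * (k₁ : G)) • ω₀ = ω₀ := by
        rw [mul_smul]
        simp only [hf] at h
        rw [h, inv_smul_smul]
      have h1 : ((k₂ : G)⁻¹ * (k₁ : G)) = 1 :=
        hsemireg _ (mul_mem (inv_mem k₂.2) k₁.2) ω₀ this
      have : (k₁ : G) = (k₂ : G) := by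
        rw [inv_mul_eq_one] at h1; exact h1.symm
      exact Subtype.ext this
    -- the orbit map from M is surjective, so Ω is finite
    have hgsurj : Function.Surjective (fun m : M => (m : G) • ω₀) := by
      intro ω
      obtain ⟨m, hm⟩ := hMtrans.exists_smul_eq ω₀ ω
      exact ⟨m, hm⟩
    have hΩfin : Finite Ω := Finite.of_surjective _ hgsurj
    -- cardinality chain
    have c1 : Nat.card K ≤ Nat.card Ω := Nat.card_le_card_of_injective f hfinj
    have c2 : Nat.card Ω ≤ Nat.card M := Nat.card_le_card_of_surjective _ hgsurj
    have c3 : Nat.card M = Nat.card (↥K ⧸ L.subgroupOf K) :=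
      Nat.card_congr (hMT.some.toEquiv.trans hKL.some.toEquiv.symm)
    have c4 : Nat.card K = Nat.card (↥K ⧸ L.subgroupOf K) * Nat.card (L.subgroupOf K) :=
      Subgroup.card_eq_card_quotient_mul_card_subgroup _
    have hLpos : 0 < Nat.card (L.subgroupOf K) := Nat.card_pos
    have c5 : Nat.card (↥K ⧸ L.subgroupOf K) ≤ Nat.card K := by
      calc Nat.card (↥K ⧸ L.subgroupOf K) = Nat.card (↥K ⧸ L.subgroupOf K) * 1 := (mul_one _).symm
        _ ≤ Nat.card (↥K ⧸ L.subgroupOf K) * Nat.card (L.subgroupOf K) :=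
            Nat.mul_le_mul_left _ hLpos
        _ = Nat.card K := c4.symm
    have hKΩ : Nat.card K = Nat.card Ω := le_antisymm c1 (c2.trans (c3.trans_le c5))
    -- all the inequalities are equalities
    have hKQ : Nat.card K = Nat.card (↥K ⧸ L.subgroupOf K) :=
      le_antisymm (c1.trans (c2.trans c3.le)) c5
    have hL1 : Nat.card (L.subgroupOf K) = 1 := by
      have hQpos : 0 < Nat.card (↥K ⧸ L.subgroupOf K) := Nat.card_pos
      exact (Nat.eq_of_mul_eq_mul_left hQpos (by rw [mul_one]; exact hKQ.symm.trans c4)).symm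
    -- hence L = ⊥
    have hLbot : L = ⊥ := by
      have := Subgroup.card_eq_one.mp hL1
      have hdisjLK : Disjoint L K := Subgroup.subgroupOf_eq_bot.mp this
      exact hdisjLK.eq_bot_of_le hLK.le
    -- K is transitive: f is bijective
    have hfbij : Function.Bijective f :=
      hfinj.bijective_of_nat_card_le (le_of_eq hKΩ.symm)
    have hKtrans : MulAction.IsPretransitive K Ω := by
      constructor
      intro a b
      obtain ⟨k₁, hk₁⟩ := hfbij.surjective a
      obtain ⟨k₂, hk₂⟩ := hfbij.surjective b
      refine ⟨k₂ * k₁⁻¹, ?_⟩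
      have : ((k₂ * k₁⁻¹ : K) : G) • a = b := by
        rw [← hk₁, ← hk₂]
        simp only [hf]
        rw [Subgroup.coe_mul, Subgroup.coe_inv, mul_smul, inv_smul_smul]
      exact this
    -- K is a minimal normal subgroup
    have hKbot : K ≠ ⊥ := by
      intro h
      rw [h] at hLK
      exact not_lt_bot hLK
    have hKmin : ∀ N : Subgroup G, N.Normal → N ≤ K → N = ⊥ ∨ N = K := by
      intro N hN hNK
      rcases hchief N hN (hLbot ▸ bot_le) hNK with h | h
      · exact Or.inl (h.trans hLbot)
      · exact Or.inr h
    have hKplinth : IsPlinth Ω K := ⟨hK, hKbot, hKmin, hKtrans⟩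
    exact ⟨⟨K, hKplinth, le_refl K⟩, fun huniq => (huniq K hKplinth) ▸ le_refl K⟩
  · -- M ≤ K
    have hMleK : M ≤ K := by
      rw [← hMK]; exact inf_le_right
    exact ⟨⟨M, ⟨hMnorm, hMbot, hMmin, hMtrans⟩, hMleK⟩, fun _ => hMleK⟩
end
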